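/- For every x ∈ {1,...,n}, one has r_0(x) = -Σ_{j=2}^{x} r_1(j). -/

import Mathlib

open Finset

namespace Secretary

/-- Binomial coefficient on integers: zero when `b < 0` or `b > a`. -/
noncomputable def Cb (a b : ℤ) : ℝ :=
  if 0 ≤ b ∧ b ≤ a then (Nat.choose a.toNat b.toNat : ℝ) else 0

/-- The value `π(i)` of a permutation of `{1,...,n}` in 1-based indexing. -/
def pv (n : ℕ) (π : Equiv.Perm (Fin n)) (i : ℕ) : ℕ :=
  if h : i - 1 < n then ((π ⟨i - 1, h⟩ : Fin n) : ℕ) + 1 else 0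

/-- The relative rank `ρ_π(i)`: the number of `j ∈ {1,...,i}` with `π(j) ≤ π(i)`. -/
def rho (n : ℕ) (π : Equiv.Perm (Fin n)) (i : ℕ) : ℕ :=
  ((Finset.Icc 1 i).filter fun j => pv n π j ≤ pv n π i).card

/-- Extension of a sequence `s` with `s (k+1) = n - 1`. -/
def sExt (n k : ℕ) (s : ℕ → ℕ) (l : ℕ) : ℕ := if l = k + 1 then n - 1 else s l

/-- `i` is a `(π, l, w)`-element. -/
def IsElem (n k : ℕ) (s : ℕ → ℕ) (π : Equiv.Perm (Fin n)) (l i : ℕ) : Prop :=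
  sExt n k s l < i ∧ i ≤ sExt n k s (l + 1) ∧ rho n π i ≤ l

/-- `l` is a `w`-threshold of `π`. -/
def IsThreshold (n k : ℕ) (s : ℕ → ℕ) (π : Equiv.Perm (Fin n)) (l : ℕ) : Prop :=
  1 ≤ l ∧ l ≤ k ∧ ∃ i, IsElem n k s π l i

open Classical in
/-- `π` is a lucky permutation for the sequence `w = s`. -/
def Lucky (n k : ℕ) (s : ℕ → ℕ) (π : Equiv.Perm (Fin n)) : Prop :=
  if ∃ l, IsThreshold n k s π l then
    pv n π (sInf {i | IsElem n k s π (sInf {l | IsThreshold n k s π l}) i}) ≤ k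
  else pv n π n ≤ k

/-- The maps `r_l` (first argument an integer `l ≤ k`). -/
noncomputable def rr (n k : ℕ) (l : ℤ) (x : ℕ) : ℝ :=
  if l < 0 then 0
  else if l = 0 then
    1 / (x : ℝ) - (k : ℝ) / n - Cb ((n : ℤ) - x - 1) k / ((x : ℝ) * Cb n k)
      - (1 / Cb n k) * ∑ j ∈ Finset.Icc 1 x, Cb ((n : ℤ) - j - 1) ((k : ℤ) - 1) / (j : ℝ)
  else
    ((Nat.factorial (x - l.toNat - 1) : ℝ) / (Nat.factorial x : ℝ)) *
      (1 - (1 / ((l : ℝ) * Cb n x)) *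
        ∑ j ∈ Finset.range (l.toNat + 1),
          ((l : ℝ) - j) * Cb k j * Cb ((n : ℤ) - k) ((x : ℤ) - j))

/-- The constant `δ_{k,n}`. -/
noncomputable def delta (n k : ℕ) : ℝ :=
  if k = 1 then -(1 / (n : ℝ)) * ∑ j ∈ Finset.Icc 1 (n - 1), (1 : ℝ) / j
  else (Nat.factorial (n - k) : ℝ) / (Nat.factorial n : ℝ)

/-- The maps `d_l` for `0 ≤ l ≤ k`. -/
noncomputable def d (n k : ℕ) (l x : ℕ) : ℝ :=
  if l = 0 then
    -1 + (k : ℝ) * x / n + Cb ((n : ℤ) - x - 1) k / Cb n k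
      + ((x : ℝ) / Cb n k) * ∑ j ∈ Finset.Icc 1 x, Cb ((n : ℤ) - j - 1) ((k : ℤ) - 1) / (j : ℝ)
  else if l = 1 then
    -((k : ℝ) / n) - (1 / Cb n k) * ∑ j ∈ Finset.Icc 1 x, Cb ((n : ℤ) - j - 1) ((k : ℤ) - 1) / (j : ℝ)
  else
    ((k : ℝ) * (Nat.factorial x : ℝ) * (Nat.factorial (n - l - x) : ℝ) /
        ((l : ℝ) * ((l : ℝ) - 1) * (Nat.factorial n : ℝ))) *
      ∑ j ∈ Finset.range (l - 1), Cb ((k : ℤ) - 1) j * Cb ((n : ℤ) - k) ((x : ℤ) + l - j - 1)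

/-- The maps `c_l(x) = d_l(x - l)`. -/
noncomputable def c (n k l x : ℕ) : ℝ := d n k l (x - l)

/-- The constant `ξ_{k,n}`. -/
noncomputable def xi (n k : ℕ) : ℝ :=
  (k : ℝ) * (Nat.factorial (n - k - 1) : ℝ) / (Nat.factorial n : ℝ)

/-- `w` (given as a 1-indexed function) is a word in `X^{(k-l)}`, i.e. its `j`-th letter
belongs to `X_{l+j} = {l+j, ..., n-1}` for `1 ≤ j ≤ k - l`. -/
def memX (n k l : ℕ) (w : ℕ → ℕ) : Prop :=
  ∀ j ∈ Finset.Icc 1 (k - l), l + j ≤ w j ∧ w j ≤ n - 1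

/-- The left-shift operator removing the first `l` letters of a word. -/
def shift (l : ℕ) (w : ℕ → ℕ) : ℕ → ℕ := fun j => w (l + j)

/-- The maps `R_{l,j}`. -/
noncomputable def Rmap (n k l : ℕ) (w : ℕ → ℕ) (j : ℕ) : ℝ :=
  if 1 ≤ j ∧ j ≤ k - l then
    rr n k ((l : ℤ) + j - 1) (w j)
      - rr n k ((l : ℤ) + j - 1) (if j = k - l then n - 1 else w (j + 1))
  else 0

/-- The maps `Γ_{l,j,j'}`. -/
noncomputable def Gam (n k l j j' : ℕ) (w : ℕ → ℕ) : ℝ :=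
  if 1 ≤ j ∧ j ≤ j' ∧ j' ≤ k - l then
    ∏ t ∈ Finset.Icc j j', ((w t : ℝ) - l - t + 1)
  else 1

/-- The maps `T_l`. -/
noncomputable def Tmap (n k l : ℕ) (w : ℕ → ℕ) : ℝ :=
  (∑ j ∈ Finset.Icc 1 (k - l), Rmap n k l w j * Gam n k l 1 j w)
    + xi n k * Gam n k l 1 (k - l) w

/-- The maps `D_l(w) = r_{l-1}(x_1) - T_l(w)`, with `x_1 := n-1` when `l = k`. -/
noncomputable def Dmap (n k l : ℕ) (w : ℕ → ℕ) : ℝ :=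
  rr n k ((l : ℤ) - 1) (if l = k then n - 1 else w 1) - Tmap n k l w

/-- The maps `F_{l,w}(x) = -c_{l-1}(x) - x·D_l(w)`. -/
noncomputable def Fmap (n k l : ℕ) (w : ℕ → ℕ) (x : ℕ) : ℝ :=
  -(c n k (l - 1) x) - (x : ℝ) * Dmap n k l w

/-- The maps `a_l`. -/
noncomputable def amap (n k l x : ℕ) : ℝ :=
  (1 / Cb n x) * ∑ j ∈ Finset.range (l + 1), Cb k j * Cb ((n : ℤ) - k) ((x : ℤ) - j)

/-- The maps `b_l`. -/
noncomputable def bmap (n k l x : ℕ) : ℝ :=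
  (1 / ((l : ℝ) * Cb n x)) *
    ∑ j ∈ Finset.range (l + 1), (j : ℝ) * Cb k j * Cb ((n : ℤ) - k) ((x : ℤ) - j)

/-- `π ∈ S(l0, i0)`: `π` is lucky for `s`, `l0` is the smallest `s`-threshold of `π`,
and `i0` is the smallest `(π, l0, s)`-element. -/
def SMem (n k : ℕ) (s : ℕ → ℕ) (l0 i0 : ℕ) (π : Equiv.Perm (Fin n)) : Prop :=
  Lucky n k s π ∧ IsLeast {l | IsThreshold n k s π l} l0 ∧
    IsLeast {i | IsElem n k s π l0 i} i0

/-- `π ∈ S(Y, Y', l0, i0)`. -/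
def SYYMem (n k : ℕ) (s : ℕ → ℕ) (Y Y' : Finset ℕ) (l0 i0 : ℕ) (π : Equiv.Perm (Fin n)) :
    Prop :=
  SMem n k s l0 i0 π ∧ ((Finset.Icc 1 i0).image (pv n π)) ∩ Finset.Icc 1 k = Y ∧
    ((Finset.Icc 1 i0).image (pv n π)) ∩ Finset.Icc (k + 1) n = Y'

/-! Telescoping: `r_0(1) = 0`, and `r_0(x+1) - r_0(x) = -r_1(x+1)`. The increment follows from
Pascal's rule `C(n-x-1,k) = C(n-x-2,k) + C(n-x-2,k-1)` together with the symmetry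
`C(n-k,x)/C(n,x) = C(n-x,k)/C(n,k)` (both sides are the probability that a random `x`-set and a
random `k`-set of `{1,...,n}` are disjoint), which brings `r_1` to the form
`r_1(x) = (1 - C(n-x,k)/C(n,k)) / (x(x-1))`. -/

lemma Cb_natCast (a b : ℕ) : Cb a b = a.choose b := by
  unfold Cb
  split_ifs with h
  · simp
  · rw [Nat.choose_eq_zero_of_lt (by omega), Nat.cast_zero]

lemma Cb_eq_zero {a b : ℤ} (h : ¬(0 ≤ b ∧ b ≤ a)) : Cb a b = 0 := if_neg h

lemma Cb_ne_zero {a b : ℕ} (h : b ≤ a) : Cb a b ≠ 0 := by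
  rw [Cb_natCast]
  exact_mod_cast (Nat.choose_pos h).ne'

lemma Cb_add_one_left (a : ℤ) {b : ℤ} (hb : 1 ≤ b) : Cb (a + 1) b = Cb a b + Cb a (b - 1) := by
  rcases lt_or_ge a 0 with ha | ha
  · rw [Cb_eq_zero (by omega), Cb_eq_zero (by omega), Cb_eq_zero (a := a) (by omega), add_zero]
  · lift a to ℕ using ha
    obtain ⟨c, rfl⟩ : ∃ c : ℕ, b = c + 1 := ⟨(b - 1).toNat, by omega⟩
    rw [add_sub_cancel_right]
    exact_mod_cast (Cb_natCast (a + 1) (c + 1)).trans (by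
      rw [Nat.choose_succ_succ', Nat.cast_add, ← Cb_natCast, ← Cb_natCast]; push_cast; ring)

theorem _root_.Nat.choose_mul_choose_sub_comm (n a b : ℕ) :
    n.choose a * (n - a).choose b = n.choose b * (n - b).choose a := by
  rcases le_or_gt (a + b) n with h | h
  · have hab := Nat.choose_mul (n := n) (Nat.le_add_right a b)
    have hba := Nat.choose_mul (n := n) (Nat.le_add_left b a)
    rw [Nat.add_sub_cancel_left] at hab
    rw [Nat.add_sub_cancel, ← Nat.choose_symm_add] at hba
    rw [← hab, ← hba]
  · have hz : ∀ p q, n < p + q → n.choose p * (n - p).choose q = 0 := fun p q hpq => by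
      rcases le_or_gt p n with hp | hp
      · rw [Nat.choose_eq_zero_of_lt (by omega : n - p < q), mul_zero]
      · rw [Nat.choose_eq_zero_of_lt hp, zero_mul]
    rw [hz a b h, hz b a (by omega)]

lemma Cb_sub_div_Cb_comm {n m k : ℕ} (hm : m ≤ n) (hk : k ≤ n) :
    Cb ((n : ℤ) - k) m / Cb n m = Cb ((n : ℤ) - m) k / Cb n k := by
  rw [← Nat.cast_sub hk, ← Nat.cast_sub hm, Cb_natCast, Cb_natCast, Cb_natCast, Cb_natCast,
    div_eq_div_iff (by exact_mod_cast (Nat.choose_pos hm).ne') (by exact_mod_cast (Nat.choose_pos hk).ne')]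
  norm_cast
  rw [mul_comm, ← Nat.choose_mul_choose_sub_comm, mul_comm]

lemma rr_zero_apply (n k x : ℕ) : rr n k 0 x =
    1 / (x : ℝ) - (k : ℝ) / n - Cb ((n : ℤ) - x - 1) k / ((x : ℝ) * Cb n k)
      - (1 / Cb n k) * ∑ j ∈ Icc 1 x, Cb ((n : ℤ) - j - 1) ((k : ℤ) - 1) / (j : ℝ) := by
  simp [rr]

lemma rr_one_apply {n k x : ℕ} (hx : 2 ≤ x) (hxn : x ≤ n) (hkn : k ≤ n) :
    rr n k 1 x = (1 - Cb ((n : ℤ) - x) k / Cb n k) / (x * (x - 1)) := by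
  have hk0 : Cb k 0 = 1 := by simpa using Cb_natCast k 0
  obtain ⟨y, rfl⟩ : ∃ y, x = y + 2 := ⟨x - 2, by omega⟩
  rw [← Cb_sub_div_Cb_comm hxn hkn]
  simp only [rr, Int.reduceLT, if_false, one_ne_zero, Int.toNat_one, Nat.add_one_sub_one,
    add_tsub_cancel_right, Nat.factorial_succ, Nat.cast_mul, Nat.cast_add, Nat.cast_one, Int.cast_one, Nat.cast_ofNat, one_mul, one_div, Nat.reduceAdd,
    sum_range_succ, range_one, sum_singleton, CharP.cast_eq_zero, sub_zero, hk0, mul_one,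
    sub_self, zero_mul, add_zero]
  rw [show (y : ℝ) + 2 - 1 = y + 1 by ring]
  field_simp
  ring

lemma rr_zero_one {n k : ℕ} (hk : 1 ≤ k) (hkn : k < n) : rr n k 0 1 = 0 := by
  have hpascal := Cb_add_one_left ((n : ℤ) - 1 - 1) (b := k) (by exact_mod_cast hk)
  rw [sub_add_cancel] at hpascal
  have hratio := Cb_sub_div_Cb_comm (m := 1) (by omega) hkn.le
  rw [← Nat.cast_sub hkn.le, Cb_natCast, Cb_natCast, Nat.cast_one, Nat.choose_one_right,
    Nat.choose_one_right, Nat.cast_sub hkn.le, hpascal] at hratio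
  rw [rr_zero_apply, Icc_self, sum_singleton]
  have hCb := Cb_ne_zero hkn.le
  have hn : (n : ℝ) ≠ 0 := Nat.cast_ne_zero.mpr (by omega)
  push_cast
  field_simp at hratio ⊢
  linear_combination hratio

lemma rr_zero_succ {n k x : ℕ} (hk : 1 ≤ k) (hkn : k ≤ n) (hx : 1 ≤ x) (hxn : x + 1 ≤ n) :
    rr n k 0 (x + 1) = rr n k 0 x - rr n k 1 (x + 1) := by
  have hpascal := Cb_add_one_left ((n : ℤ) - (x + 1) - 1) (b := k) (by exact_mod_cast hk)
  rw [sub_add_cancel] at hpascal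
  rw [rr_zero_apply, rr_zero_apply, rr_one_apply (by omega) hxn hkn,
    sum_Icc_succ_top (by omega : 1 ≤ x + 1)]
  have hCb := Cb_ne_zero hkn
  have hx0 : (x : ℝ) ≠ 0 := Nat.cast_ne_zero.mpr (by omega)
  push_cast
  rw [show (n : ℤ) - x - 1 = n - (x + 1) by ring, hpascal, add_sub_cancel_right]
  field_simp
  ring

theorem r_zero_eq_neg_sum (n k : ℕ) (hk : 1 ≤ k) (hkn : k < n) :
    ∀ x ∈ Finset.Icc 1 n, rr n k 0 x = -∑ j ∈ Finset.Icc 2 x, rr n k 1 j := by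
  simp only [mem_Icc, and_imp]
  intro x hx1 hxn
  induction x, hx1 using Nat.le_induction with
  | base => rw [rr_zero_one hk hkn, Icc_eq_empty (by omega), sum_empty, neg_zero]
  | succ x hx ih =>
    rw [rr_zero_succ hk hkn.le hx hxn, ih (by omega), sum_Icc_succ_top (by omega), neg_add,
      sub_eq_add_neg]
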